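/- arXiv:2404.07639 — 4 statements merged into one kernel-verified Lean document; each statement's English description precedes it below -/
import Mathlib

section
/- Let R be a commutative Noetherian integral domain, n a positive integer, and M a finitely generated R[n]-module. Then M is torsion free (i.e. no nonzero element of M is annihilated by a non-zero-divisor of R[n]) if and only if M is isomorphic as an R[n]-module to a submodule of a finitely generated free R[n]-module. -/
open Polynomial

noncomputable section

/-- The primitive multiple ring `R[n] = R[t]/(t^n)`. -/
abbrev Rn (R : Type*) [CommRing R] (n : ℕ) : Type _ :=
  Polynomial R ⧸ Ideal.span {(X : Polynomial R) ^ n}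

/-- The class `t` of the variable in `R[n]`. -/
def tn (R : Type*) [CommRing R] (n : ℕ) : Rn R n :=
  Ideal.Quotient.mk _ X

/-- `R[k] = R[n]/(t^k)` as an `R[n]`-module (for `k ≤ n` this is `R[t]/(t^k)`
with the `R[n]`-module structure coming from the natural surjection `R[n] → R[k]`). -/
abbrev Rmod (R : Type*) [CommRing R] (n k : ℕ) : Type _ :=
  Rn R n ⧸ (Ideal.span {tn R n ^ k})

/-- The constant term homomorphism `R[n] → R` (for `n > 0`). -/
def ct (R : Type*) [CommRing R] (n : ℕ) (hn : 0 < n) : Rn R n →+* R :=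
  Ideal.Quotient.lift _ (evalRingHom 0) (by
    intro a ha
    rw [Ideal.mem_span_singleton] at ha
    obtain ⟨c, rfl⟩ := ha
    simp [zero_pow hn.ne'])

section Modules

variable (R : Type*) [CommRing R] (n : ℕ) (M : Type*) [AddCommGroup M] [Module (Rn R n) M]

/-- The submodule `M_i = t^i M` of an `R[n]`-module `M`. -/
def tMi (i : ℕ) : Submodule (Rn R n) M :=
  LinearMap.range (LinearMap.lsmul (Rn R n) M (tn R n ^ i))

/-- The submodule `M^{(i)} = {m ∈ M : t^i m = 0}` of an `R[n]`-module `M`. -/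
def kt (i : ℕ) : Submodule (Rn R n) M :=
  LinearMap.ker (LinearMap.lsmul (Rn R n) M (tn R n ^ i))

/-- `G_i(M) = t^i M / t^{i+1} M`. -/
abbrev Gi (i : ℕ) :=
  (tMi R n M i) ⧸ (Submodule.comap (tMi R n M i).subtype (tMi R n M (i + 1)))

/-- `G^{(i+1)}(M) = M^{(i+1)}/M^{(i)}` (note the shift by one in the indexing:
`Gup R n M i` is `G^{(i+1)}(M)`). -/
abbrev Gup (i : ℕ) :=
  (kt R n M (i + 1)) ⧸ (Submodule.comap (kt R n M (i + 1)).subtype (kt R n M i))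

lemma tMi_succ_mem {i : ℕ} {x : M} (hx : x ∈ tMi R n M i) :
    tn R n • x ∈ tMi R n M (i + 1) := by
  obtain ⟨m, rfl⟩ := hx
  exact ⟨m, by simp [LinearMap.lsmul_apply, smul_smul, pow_succ']⟩

lemma kt_pred_mem {i : ℕ} {x : M} (hx : x ∈ kt R n M (i + 1)) :
    tn R n • x ∈ kt R n M i := by
  simp only [kt, LinearMap.mem_ker, LinearMap.lsmul_apply] at hx ⊢
  rw [smul_smul, ← pow_succ]
  exact hx

/-- `μ_i : G_i(M) → G_{i+1}(M)`, induced by multiplication by `t`. -/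
def muMap (i : ℕ) : Gi R n M i →ₗ[Rn R n] Gi R n M (i + 1) :=
  Submodule.mapQ _ _
    (LinearMap.restrict (LinearMap.lsmul (Rn R n) M (tn R n))
      (fun _ hx => tMi_succ_mem R n M hx))
    (fun x hx => by
      simp only [Submodule.mem_comap] at hx ⊢
      exact tMi_succ_mem R n M hx)

/-- `λ_{i+1} : G^{(i+2)}(M) → G^{(i+1)}(M)`, induced by multiplication by `t`
(with the shifted indexing, `lamMap R n M i : Gup (i+1) → Gup i`). -/
def lamMap (i : ℕ) : Gup R n M (i + 1) →ₗ[Rn R n] Gup R n M i :=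
  Submodule.mapQ _ _
    (LinearMap.restrict (LinearMap.lsmul (Rn R n) M (tn R n))
      (fun _ hx => kt_pred_mem R n M hx))
    (fun x hx => by
      simp only [Submodule.mem_comap] at hx ⊢
      exact kt_pred_mem R n M hx)

/-- The composition `μ_{k-1} ∘ ... ∘ μ_0 : G_0(M) → G_k(M)`. -/
def muComp : (k : ℕ) → (Gi R n M 0 →ₗ[Rn R n] Gi R n M k)
  | 0 => LinearMap.id
  | (k + 1) => (muMap R n M k).comp (muComp k)

/-- The composition `λ_1 ∘ ... ∘ λ_k : G^{(k+1)}(M) → G^{(1)}(M)`. -/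
def lamComp : (k : ℕ) → (Gup R n M k →ₗ[Rn R n] Gup R n M 0)
  | 0 => LinearMap.id
  | (k + 1) => (lamComp k).comp (lamMap R n M k)

end Modules

/-!
`A = R[t]/(t^n)` is free over `R` with basis `1, t, …, t^(n-1)`, and the coefficient of `t^(n-1)`
is a Frobenius form `τ : A → R`: every `R`-linear `g : M → R` lifts to the `A`-linear map
`x ↦ ∑_{i+j=n-1} g(t^j x) t^i`, and `τ` composed with this lift is `g` again.
A torsion-free finitely generated `A`-module is torsion-free and finitely generated over `R`,
so some nonzero `c : R` multiplies it into the span of a maximal linearly independent family of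
generators; this embeds it into some `R^m`, and lifting the `m` coordinates embeds it into `A^m`.
Conversely, submodules of `A^m` are torsion-free.
-/

open Module

section TorsionFree

variable {R M : Type*} [CommRing R] [AddCommGroup M] [Module R M]

theorem Submodule.isTorsionFree_iff_torsion_eq_bot' :
    IsTorsionFree R M ↔ Submodule.torsion R M = ⊥ := by
  refine ⟨fun _ ↦ ?_, fun h ↦ ⟨fun r hr ↦ ?_⟩⟩
  · refine eq_bot_iff.2 fun x ⟨a, hax⟩ ↦ ?_
    exact (isRegular_iff_mem_nonZeroDivisors.2 a.2).smul_eq_zero_iff_right.1 hax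
  · refine isSMulRegular_iff_right_eq_zero_of_smul.2 fun x hx ↦ ?_
    have : x ∈ Submodule.torsion R M := ⟨⟨r, isRegular_iff_mem_nonZeroDivisors.1 hr⟩, hx⟩
    rwa [h] at this

theorem IsRegular.algebraMap {A : Type*} [CommRing A] [Algebra R A] [IsTorsionFree R A] {r : R}
    (hr : IsRegular r) : IsRegular (algebraMap R A r) :=
  (Commute.isRegular_iff (Commute.all _)).2 fun a b h ↦
    hr.isSMulRegular (by simpa only [Algebra.smul_def] using h)

variable [IsDomain R]

theorem Submodule.exists_ne_zero_smul_mem_of_span_eq_top {ι : Type*} [Fintype ι] {s : ι → M}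
    (hs : Submodule.span R (Set.range s) = ⊤) (N : Submodule R M)
    (h : ∀ i, ∃ a : R, a ≠ 0 ∧ a • s i ∈ N) : ∃ c : R, c ≠ 0 ∧ ∀ x : M, c • x ∈ N := by
  classical
  choose a ha has using h
  refine ⟨∏ i, a i, Finset.prod_ne_zero_iff.2 fun i _ ↦ ha i, fun x ↦ ?_⟩
  have hspan : Submodule.span R (Set.range s) ≤ N.comap (LinearMap.lsmul R M (∏ i, a i)) := by
    rw [Submodule.span_le]
    rintro _ ⟨i, rfl⟩
    rw [SetLike.mem_coe, Submodule.mem_comap, LinearMap.lsmul_apply,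
      ← Finset.prod_erase_mul _ _ (Finset.mem_univ i), mul_smul]
    exact N.smul_mem _ (has i)
  exact hspan (hs ▸ Submodule.mem_top)

theorem Module.exists_injective_pi_fin_of_isTorsionFree [Module.Finite R M] [IsTorsionFree R M] :
    ∃ (m : ℕ) (f : M →ₗ[R] Fin m → R), Function.Injective f := by
  classical
  obtain ⟨m, s, hs⟩ := Module.Finite.exists_fin (R := R) (M := M)
  obtain ⟨I, hI, hmax⟩ := exists_maximal_linearIndepOn R s
  obtain ⟨c, hc, hcN⟩ := Submodule.exists_ne_zero_smul_mem_of_span_eq_top hs _ fun i ↦ by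
    by_cases hi : i ∈ I
    · exact ⟨1, one_ne_zero, by simpa using Submodule.subset_span (Set.mem_image_of_mem s hi)⟩
    · exact hmax i hi
  let b : Basis (Fin _) R (Submodule.span R (s '' I)) :=
    ((Basis.span hI).map (LinearEquiv.ofEq _ _ (congrArg _ (Set.image_eq_range s I).symm))).reindex
      (Fintype.equivFin I)
  refine ⟨_, b.equivFun.toLinearMap ∘ₗ (LinearMap.lsmul R M c).codRestrict _ hcN, ?_⟩
  exact b.equivFun.injective.comp
    ((LinearMap.injective_codRestrict_iff _).2 (LinearMap.lsmul_injective hc))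

end TorsionFree

section ExtendScalars

variable {R A M N : Type*} [CommSemiring R] [Semiring A] [Algebra R A]
  [AddCommMonoid M] [Module R M] [Module A M] [IsScalarTower R A M]
  [AddCommMonoid N] [Module R N] [Module A N] [IsScalarTower R A N]

def LinearMap.extendScalarsOfAdjoinEqTop {s : Set A} (hs : Algebra.adjoin R s = ⊤)
    (f : M →ₗ[R] N) (hf : ∀ a ∈ s, ∀ x, f (a • x) = a • f x) : M →ₗ[A] N where
  toFun := f
  map_add' := f.map_add
  map_smul' a x := by
    have ha : a ∈ Algebra.adjoin R s := hs ▸ Algebra.mem_top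
    induction ha using Algebra.adjoin_induction generalizing x with
    | mem a ha => exact hf a ha x
    | algebraMap r => simp only [algebraMap_smul, map_smul, RingHom.id_apply]
    | add a b _ _ ha hb => simp only [add_smul, map_add, ha, hb]
    | mul a b _ _ ha hb => simp only [mul_smul, ha, hb, RingHom.id_apply]

@[simp]
lemma LinearMap.coe_extendScalarsOfAdjoinEqTop {s : Set A} (hs : Algebra.adjoin R s = ⊤)
    (f : M →ₗ[R] N) (hf : ∀ a ∈ s, ∀ x, f (a • x) = a • f x) :
    ⇑(f.extendScalarsOfAdjoinEqTop hs hf) = f := rfl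

end ExtendScalars

namespace Rn

open Finset

variable (R : Type*) [CommRing R] (n : ℕ)

def powerBasis : PowerBasis R (Rn R n) := AdjoinRoot.powerBasis' (monic_X_pow n)

@[simp] lemma powerBasis_gen : (powerBasis R n).gen = tn R n := rfl

@[simp] lemma powerBasis_dim [Nontrivial R] : (powerBasis R n).dim = n := natDegree_X_pow n

instance : Module.Free R (Rn R n) := .of_basis (powerBasis R n).basis

instance : Module.Finite R (Rn R n) := (powerBasis R n).finite

lemma adjoin_tn : Algebra.adjoin R {tn R n} = ⊤ := (powerBasis R n).adjoin_gen_eq_top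

lemma tn_pow_self : tn R n ^ n = 0 := by
  rw [tn, ← map_pow]
  exact Ideal.Quotient.eq_zero_iff_mem.2 (Ideal.mem_span_singleton_self _)

variable {R} {k : ℕ} {M : Type*} [AddCommGroup M] [Module R M] [Module (Rn R (k + 1)) M]

lemma sum_antidiagonal_apply_tn_smul (g : M →ₗ[R] R) (x : M) :
    ∑ p ∈ antidiagonal k, g (tn R (k + 1) ^ p.2 • tn R (k + 1) • x) • tn R (k + 1) ^ p.1 =
      tn R (k + 1) • ∑ p ∈ antidiagonal k, g (tn R (k + 1) ^ p.2 • x) • tn R (k + 1) ^ p.1 := by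
  set t := tn R (k + 1)
  have hx : t ^ (k + 1) • x = 0 := by rw [tn_pow_self]; exact zero_smul (Rn R (k + 1)) x
  calc ∑ p ∈ antidiagonal k, g (t ^ p.2 • t • x) • t ^ p.1
      = ∑ p ∈ antidiagonal (k + 1), g (t ^ p.2 • x) • t ^ p.1 := by
        simp [Nat.sum_antidiagonal_succ', tn_pow_self, t, smul_smul, ← pow_succ]
    _ = t • ∑ p ∈ antidiagonal k, g (t ^ p.2 • x) • t ^ p.1 := by
        rw [Nat.sum_antidiagonal_succ, hx, map_zero, zero_smul, zero_add, smul_sum]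
        simp only [pow_succ', smul_eq_mul, mul_smul_comm]

variable [IsScalarTower R (Rn R (k + 1)) M]

variable (k) in
def dualLift (g : M →ₗ[R] R) : M →ₗ[Rn R (k + 1)] Rn R (k + 1) :=
  LinearMap.extendScalarsOfAdjoinEqTop (adjoin_tn R (k + 1))
    (∑ p ∈ antidiagonal k,
      (g ∘ₗ DistribSMul.toLinearMap R M (tn R (k + 1) ^ p.2)).smulRight (tn R (k + 1) ^ p.1))
    (by simpa [LinearMap.sum_apply, DistribSMul.toLinearMap_apply] using
      sum_antidiagonal_apply_tn_smul g)

lemma dualLift_apply (g : M →ₗ[R] R) (x : M) :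
    dualLift k g x = ∑ p ∈ antidiagonal k, g (tn R (k + 1) ^ p.2 • x) • tn R (k + 1) ^ p.1 := by
  simp [dualLift, LinearMap.sum_apply, DistribSMul.toLinearMap_apply]

variable [Nontrivial R]

def topCoeff : Rn R (k + 1) →ₗ[R] R := (powerBasis R (k + 1)).basis.coord ⟨k, by simp⟩

lemma topCoeff_tn_pow {i : ℕ} (hi : i ≤ k) :
    topCoeff (tn R (k + 1) ^ i) = if i = k then 1 else 0 := by
  have := (powerBasis R (k + 1)).basis_eq_pow ⟨i, by simp; omega⟩
  simp only [powerBasis_gen] at this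
  rw [topCoeff, ← this, Module.Basis.coord_apply, Module.Basis.repr_self, Finsupp.single_apply]
  simp [Fin.ext_iff, eq_comm]

lemma topCoeff_dualLift (g : M →ₗ[R] R) (x : M) : topCoeff (dualLift k g x) = g x := by
  rw [dualLift_apply, map_sum, Finset.sum_eq_single (k, 0)]
  · simp [topCoeff_tn_pow le_rfl]
  · rintro ⟨i, j⟩ hij hne
    rw [HasAntidiagonal.mem_antidiagonal] at hij
    have hik : i ≠ k := by rintro rfl; exact hne (by simp; omega)
    rw [map_smul, topCoeff_tn_pow (by omega), if_neg hik, smul_zero]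
  · simp

lemma injective_pi_dualLift {ι : Type*} (g : M →ₗ[R] ι → R) (hg : Function.Injective g) :
    Function.Injective (LinearMap.pi fun i ↦ dualLift k (LinearMap.proj i ∘ₗ g)) := by
  refine fun x y hxy ↦ hg (funext fun i ↦ ?_)
  simpa [topCoeff_dualLift] using congrArg (fun f ↦ topCoeff (f i)) hxy

end Rn

theorem torsionFree_iff_submodule_of_free_general
    {R : Type*} [CommRing R] [IsDomain R]
    (n : ℕ) (hn : 0 < n)
    (M : Type*) [AddCommGroup M] [Module (Rn R n) M] [Module.Finite (Rn R n) M] :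
    Submodule.torsion (Rn R n) M = ⊥ ↔
      ∃ (k : ℕ) (f : M →ₗ[Rn R n] (Fin k → Rn R n)), Function.Injective f := by
  rw [← Submodule.isTorsionFree_iff_torsion_eq_bot']
  constructor
  · intro
    let _ : Module R M := Module.compHom M (algebraMap R (Rn R n))
    have : IsScalarTower R (Rn R n) M := .of_compHom R (Rn R n) M
    have : Module.Finite R M := .trans (Rn R n) M
    have : IsTorsionFree R M := .comap (algebraMap R (Rn R n)) (fun _ ↦ IsRegular.algebraMap)
      fun _ _ ↦ rfl
    obtain ⟨m, g, hg⟩ := Module.exists_injective_pi_fin_of_isTorsionFree (R := R) (M := M)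
    obtain ⟨k, rfl⟩ := Nat.exists_eq_add_one_of_ne_zero hn.ne'
    exact ⟨m, _, Rn.injective_pi_dualLift g hg⟩
  · rintro ⟨k, f, hf⟩
    exact hf.moduleIsTorsionFree f (map_smul f)

/-- A finitely generated `R[n]`-module is torsion free iff it is isomorphic to a
submodule of a finitely generated free `R[n]`-module. -/
theorem torsionFree_iff_submodule_of_free
    {R : Type*} [CommRing R] [IsDomain R] [IsNoetherianRing R]
    (n : ℕ) (hn : 0 < n)
    (M : Type*) [AddCommGroup M] [Module (Rn R n) M] [Module.Finite (Rn R n) M] :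
    Submodule.torsion (Rn R n) M = ⊥ ↔
      ∃ (k : ℕ) (f : M →ₗ[Rn R n] (Fin k → Rn R n)), Function.Injective f :=
  torsionFree_iff_submodule_of_free_general n hn M
end
end

section
/- Let R be a commutative Noetherian integral domain, n a positive integer, and M a finitely generated R[n]-module. Then M is torsion free if and only if M^{(1)} = {m ∈ M : t m = 0} is torsion free. Moreover, if M is torsion free, then for every 1 ≤ i ≤ n the modules G^{(i)}(M) = M^{(i)}/M^{(i-1)} and M/M^{(i)} are torsion free, where M^{(i)} = {m ∈ M : t^i m = 0}. -/
open Polynomial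

noncomputable section

/-!
A non-zero-divisor `a` commutes with `t`, so on a torsion-free module `a • m ∈ M^{(i)}` forces
`m ∈ M^{(i)}`: the submodules `M^{(i)}` are saturated, and quotients by saturated submodules are
torsion free. Conversely, as `t` is nilpotent, a nonzero torsion element `x` has a last nonzero
multiple `t ^ k • x`, which is a nonzero torsion element of `M^{(1)}`.
-/

section Torsion

variable {A : Type*} [CommRing A] {M : Type*} [AddCommGroup M] [Module A M]

open nonZeroDivisors

theorem torsion_eq_bot_of_injective {N : Type*} [AddCommGroup N] [Module A N]
    {f : N →ₗ[A] M} (hf : Function.Injective f) (hM : Submodule.torsion A M = ⊥) :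
    Submodule.torsion A N = ⊥ := by
  refine (Submodule.eq_bot_iff _).mpr fun x ⟨a, hax⟩ => hf ?_
  rw [map_zero]
  have hax' : (a : A) • x = 0 := hax
  exact (Submodule.eq_bot_iff _).mp hM (f x) ⟨a, by rw [Submonoid.smul_def, ← map_smul, hax',
    map_zero]⟩

theorem torsion_quotient_eq_bot_of_smul_mem {N : Submodule A M}
    (hN : ∀ a ∈ A⁰, ∀ m : M, a • m ∈ N → m ∈ N) :
    Submodule.torsion A (M ⧸ N) = ⊥ := by
  refine (Submodule.eq_bot_iff _).mpr fun x ⟨a, hax⟩ => ?_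
  obtain ⟨m, rfl⟩ := Submodule.Quotient.mk_surjective N x
  rw [← Submodule.Quotient.mk_smul, Submodule.Quotient.mk_eq_zero] at hax
  exact (Submodule.Quotient.mk_eq_zero N).mpr (hN a a.2 m hax)

theorem mem_ker_lsmul_of_smul_mem (hM : Submodule.torsion A M = ⊥) {a : A} (ha : a ∈ A⁰)
    {b : A} {m : M} (hm : a • m ∈ LinearMap.ker (LinearMap.lsmul A M b)) :
    m ∈ LinearMap.ker (LinearMap.lsmul A M b) := by
  rw [LinearMap.mem_ker, LinearMap.lsmul_apply] at hm ⊢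
  rw [smul_comm] at hm
  exact (Submodule.eq_bot_iff _).mp hM (b • m) ⟨⟨a, ha⟩, hm⟩

theorem torsion_eq_bot_of_torsion_ker_lsmul_eq_bot {t : A} (ht : IsNilpotent t)
    (h : Submodule.torsion A (LinearMap.ker (LinearMap.lsmul A M t)) = ⊥) :
    Submodule.torsion A M = ⊥ := by
  refine (Submodule.eq_bot_iff _).mpr fun x ⟨a, hax⟩ => ?_
  have key : ∀ k : ℕ, t ^ k • x = 0 → x = 0 := by
    intro k
    induction k with
    | zero => simp
    | succ k ih =>
      intro hk
      have hy : t ^ k • x ∈ LinearMap.ker (LinearMap.lsmul A M t) := by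
        rwa [LinearMap.mem_ker, LinearMap.lsmul_apply, smul_smul, ← pow_succ']
      have hay : a • (⟨t ^ k • x, hy⟩ : LinearMap.ker (LinearMap.lsmul A M t)) = 0 :=
        Subtype.ext (by
          change (a : A) • t ^ k • x = 0
          rw [smul_comm, ← Submonoid.smul_def, hax, smul_zero])
      exact ih (congrArg Subtype.val ((Submodule.eq_bot_iff _).mp h _ ⟨a, hay⟩))
  obtain ⟨k, hk⟩ := ht
  exact key k (by rw [hk, zero_smul])

theorem torsion_eq_bot_iff_torsion_ker_lsmul_eq_bot {t : A} (ht : IsNilpotent t) :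
    Submodule.torsion A M = ⊥ ↔
      Submodule.torsion A (LinearMap.ker (LinearMap.lsmul A M t)) = ⊥ :=
  ⟨torsion_eq_bot_of_injective (Submodule.injective_subtype _),
    torsion_eq_bot_of_torsion_ker_lsmul_eq_bot ht⟩

end Torsion

theorem tn_pow_self (R : Type*) [CommRing R] (n : ℕ) : tn R n ^ n = 0 := by
  rw [tn, ← map_pow]
  exact Ideal.Quotient.eq_zero_iff_mem.mpr (Ideal.mem_span_singleton_self _)

theorem torsionFree_iff_kt_one_torsionFree_general
    {R : Type*} [CommRing R]
    (n : ℕ)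
    (M : Type*) [AddCommGroup M] [Module (Rn R n) M] :
    (Submodule.torsion (Rn R n) M = ⊥ ↔
        Submodule.torsion (Rn R n) (kt R n M 1) = ⊥) ∧
      (Submodule.torsion (Rn R n) M = ⊥ →
        ∀ i : ℕ, 1 ≤ i → i ≤ n →
          Submodule.torsion (Rn R n) (Gup R n M (i - 1)) = ⊥ ∧
          Submodule.torsion (Rn R n) (M ⧸ kt R n M i) = ⊥) := by
  have hkt_one : kt R n M 1 = LinearMap.ker (LinearMap.lsmul (Rn R n) M (tn R n)) := by
    rw [kt, pow_one]
  refine ⟨hkt_one ▸ torsion_eq_bot_iff_torsion_ker_lsmul_eq_bot ⟨n, tn_pow_self R n⟩,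
    fun hM i _ _ => ⟨?_, ?_⟩⟩
  · exact torsion_quotient_eq_bot_of_smul_mem fun a ha m hm =>
      mem_ker_lsmul_of_smul_mem hM ha hm
  · exact torsion_quotient_eq_bot_of_smul_mem fun a ha m hm => mem_ker_lsmul_of_smul_mem hM ha hm

/-- A finitely generated `R[n]`-module `M` is torsion free iff `M^{(1)} = {m : t m = 0}` is
torsion free; moreover if `M` is torsion free then, for every `1 ≤ i ≤ n`,
`G^{(i)}(M) = M^{(i)}/M^{(i-1)}` and `M/M^{(i)}` are torsion free. -/
theorem torsionFree_iff_kt_one_torsionFree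
    {R : Type*} [CommRing R] [IsDomain R] [IsNoetherianRing R]
    (n : ℕ) (hn : 0 < n)
    (M : Type*) [AddCommGroup M] [Module (Rn R n) M] [Module.Finite (Rn R n) M] :
    (Submodule.torsion (Rn R n) M = ⊥ ↔
        Submodule.torsion (Rn R n) (kt R n M 1) = ⊥) ∧
      (Submodule.torsion (Rn R n) M = ⊥ →
        ∀ i : ℕ, 1 ≤ i → i ≤ n →
          Submodule.torsion (Rn R n) (Gup R n M (i - 1)) = ⊥ ∧
          Submodule.torsion (Rn R n) (M ⧸ kt R n M i) = ⊥) :=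
  torsionFree_iff_kt_one_torsionFree_general n M
end
end

section
/- Let R be a commutative Noetherian integral domain, n a positive integer, and M a balanced R[n]-module. (1) If 0 = N_n ⊆ N_{n-1} ⊆ ... ⊆ N_1 ⊆ N_0 = M is a filtration by submodules such that, for every 0 ≤ i < n, N_i/N_{i+1} ≠ 0 and t·(N_i/N_{i+1}) = 0, then N_i = t^i M for every 1 ≤ i < n. (2) If M' ⊆ M is a submodule with t^{n-1}·M' = 0 and t·(M/M') = 0, then M' = tM. -/
open Polynomial

noncomputable section

/-- Let `M` be a balanced `R[n]`-module.
(1) If `0 = N_n ⊆ ... ⊆ N_0 = M` is a filtration with all quotients `N_i/N_{i+1}`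
nonzero and killed by `t`, then `N_i = t^i M` for `1 ≤ i < n`.
(2) If `M' ⊆ M` is a submodule with `t^{n-1} M' = 0` and `t (M/M') = 0`, then `M' = tM`. -/
theorem balanced_filtration_unique
    {R : Type*} [CommRing R] [IsDomain R] [IsNoetherianRing R]
    (n : ℕ) (hn : 0 < n)
    (M : Type*) [AddCommGroup M] [Module (Rn R n) M]
    (hbal : ∀ i : ℕ, 1 ≤ i → i ≤ n → tMi R n M i = kt R n M (n - i)) :
    (∀ N : ℕ → Submodule (Rn R n) M,
      N 0 = ⊤ → N n = ⊥ →
      (∀ i < n, N (i + 1) < N i) →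
      (∀ i < n, ∀ x ∈ N i, tn R n • x ∈ N (i + 1)) →
      ∀ i : ℕ, 1 ≤ i → i < n → N i = tMi R n M i) ∧
    (∀ M' : Submodule (Rn R n) M,
      (∀ x ∈ M', (tn R n) ^ (n - 1) • x = 0) →
      (∀ x : M, tn R n • x ∈ M') →
      M' = tMi R n M 1) := by
  constructor
  · intro N h0 hnn _ hst i hi1 hin
    -- first: t^i M ≤ N i for all i ≤ n
    have hle : ∀ j : ℕ, j ≤ n → tMi R n M j ≤ N j := by
      intro j
      induction j with
      | zero =>
        intro _ x _
        simp [h0]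
      | succ k ih =>
        intro hk x hx
        obtain ⟨m, rfl⟩ := hx
        have hm : (tn R n) ^ k • m ∈ N k := ih (le_of_lt hk) ⟨m, rfl⟩
        have := hst k hk _ hm
        rw [LinearMap.lsmul_apply, pow_succ', mul_smul]
        exact this
    -- second: N i ≤ ker t^{n-i}
    have hker : ∀ x ∈ N i, (tn R n) ^ (n - i) • x = 0 := by
      intro x hx
      have key : ∀ k : ℕ, i + k ≤ n → (tn R n) ^ k • x ∈ N (i + k) := by
        intro k
        induction k with
        | zero => intro _; simpa using hx
        | succ m ih =>
          intro hm
          have h1 : (tn R n) ^ m • x ∈ N (i + m) := ih (by omega)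
          have := hst (i + m) (by omega) _ h1
          rw [pow_succ', mul_smul]
          exact this
      have := key (n - i) (by omega)
      rw [show i + (n - i) = n by omega, hnn] at this
      simpa using this
    apply le_antisymm
    · intro x hx
      rw [hbal i hi1 (le_of_lt hin)]
      exact hker x hx
    · exact hle i (le_of_lt hin)
  · intro M' hM1 hM2
    have hbal1 := hbal 1 le_rfl hn
    apply le_antisymm
    · intro x hx
      rw [hbal1]
      exact hM1 x hx
    · intro x hx
      obtain ⟨m, rfl⟩ := hx
      have := hM2 m
      simpa [LinearMap.lsmul_apply, pow_one] using this
end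
end

section
/- Let R be a commutative Noetherian integral domain, n and p positive integers, and for 1 ≤ i ≤ p let x_i ∈ R[n] with constant term x_{i,0} ∈ R. Let I ⊆ R[n] be the ideal generated by x_1,...,x_p and I_0 ⊆ R the ideal generated by x_{1,0},...,x_{p,0}. Then: (i) (x_1,...,x_p) is a regular sequence in R[n] if and only if (x_{1,0},...,x_{p,0}) is a regular sequence in R; (ii) if (x_1,...,x_p) is a regular sequence in R[n], then for every y ∈ R one has t^{n-1} y ∈ I if and only if y ∈ I_0. -/
open Polynomial

noncomputable section

set_option linter.unusedSectionVars false

section Base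
variable {R : Type*} [CommRing R] {n : ℕ} (hn : 0 < n)

lemma tn_pow_n : (tn R n) ^ n = 0 := by
  rw [tn, ← map_pow, Ideal.Quotient.eq_zero_iff_mem]
  exact Ideal.subset_span rfl

lemma ct_mk (f : Polynomial R) : ct R n hn (Ideal.Quotient.mk _ f) = f.eval 0 := rfl

lemma ct_algebraMap (r : R) : ct R n hn (algebraMap R (Rn R n) r) = r := by
  have : algebraMap R (Rn R n) r = Ideal.Quotient.mk _ (C r) := rfl
  rw [this, ct_mk]; simp

lemma ct_surjective : Function.Surjective (ct R n hn) :=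
  fun r => ⟨algebraMap R (Rn R n) r, ct_algebraMap hn r⟩

lemma exists_of_ct_eq_zero {u : Rn R n} (hu : ct R n hn u = 0) :
    ∃ v, u = tn R n * v := by
  obtain ⟨f, rfl⟩ := Ideal.Quotient.mk_surjective u
  rw [ct_mk] at hu
  have : X ∣ f := X_dvd_iff.mpr (by rwa [coeff_zero_eq_eval_zero])
  obtain ⟨g, rfl⟩ := this
  exact ⟨Ideal.Quotient.mk _ g, by rw [tn, ← map_mul]⟩

lemma x_decomp (x : Rn R n) :
    ∃ u, x = algebraMap R (Rn R n) (ct R n hn x) + tn R n * u := by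
  obtain ⟨v, hv⟩ := exists_of_ct_eq_zero hn (u := x - algebraMap R (Rn R n) (ct R n hn x))
    (by rw [map_sub, ct_algebraMap, sub_self])
  exact ⟨v, by rw [← hv]; ring⟩

lemma phi0 [IsDomain R] {j : ℕ} (hj : j ≤ n) {u : Rn R n}
    (hu : tn R n ^ j * u = 0) : ∃ v, u = tn R n ^ (n - j) * v := by
  obtain ⟨f, rfl⟩ := Ideal.Quotient.mk_surjective u
  rw [tn, ← map_pow, ← map_mul, Ideal.Quotient.eq_zero_iff_mem,
    Ideal.mem_span_singleton] at hu
  obtain ⟨g, hg⟩ := hu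
  have hx : (X : Polynomial R) ^ n = X ^ j * X ^ (n - j) := by
    rw [← pow_add, Nat.add_sub_cancel' hj]
  rw [hx, mul_assoc] at hg
  have hf : f = X ^ (n - j) * g := mul_left_cancel₀ (pow_ne_zero _ X_ne_zero) hg
  exact ⟨Ideal.Quotient.mk _ g, by rw [hf, tn, ← map_pow, ← map_mul]⟩

end Base
section WseqDef
variable {S : Type*} [CommRing S]

/-- element-wise "nonzerodivisor mod J" -/
def NZDI (J : Ideal S) (x : S) : Prop := ∀ a, x * a ∈ J → a ∈ J

/-- element-wise weakly regular sequence -/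
def Wseq (l : List S) : Prop := ∀ i (h : i < l.length), NZDI (Ideal.ofList (l.take i)) l[i]

lemma isSMulRegular_quot_iff (J : Ideal S) (x : S) :
    IsSMulRegular (S ⧸ (J • ⊤ : Submodule S S)) x ↔ NZDI J x := by
  have hJ : (J • ⊤ : Submodule S S) = J := by rw [smul_eq_mul, Ideal.mul_top]
  constructor
  · intro h a ha
    have h0 : x • (Submodule.Quotient.mk a : S ⧸ (J • ⊤ : Submodule S S)) = x • 0 := by
      rw [smul_zero, ← Submodule.Quotient.mk_smul, Submodule.Quotient.mk_eq_zero, hJ,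
        smul_eq_mul]
      exact ha
    have := h h0
    rwa [Submodule.Quotient.mk_eq_zero, hJ] at this
  · intro h m₁ m₂ hm
    obtain ⟨a, rfl⟩ := Submodule.Quotient.mk_surjective _ m₁
    obtain ⟨b, rfl⟩ := Submodule.Quotient.mk_surjective _ m₂
    simp only [] at hm
    rw [← Submodule.Quotient.mk_smul, ← Submodule.Quotient.mk_smul,
      Submodule.Quotient.eq] at hm
    rw [Submodule.Quotient.eq, hJ]
    rw [hJ, smul_eq_mul, smul_eq_mul, ← mul_sub] at hm
    exact h _ hm

open RingTheory.Sequence in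
lemma isWeaklyRegular_ring_iff (l : List S) :
    IsWeaklyRegular S l ↔ Wseq l := by
  rw [isWeaklyRegular_iff]
  exact forall_congr' fun i => forall_congr' fun h => isSMulRegular_quot_iff _ _

lemma wseq_append_singleton (l : List S) (x : S) :
    Wseq (l ++ [x]) ↔ Wseq l ∧ NZDI (Ideal.ofList l) x := by
  constructor
  · intro h
    constructor
    · intro i hi
      have := h i (by simp; omega)
      rwa [List.take_append_of_le_length (le_of_lt hi),
        List.getElem_append_left hi] at this
    · have := h l.length (by simp)
      rw [List.take_append_of_le_length le_rfl, List.take_length,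
        List.getElem_append_right le_rfl] at this
      simpa using this
  · rintro ⟨h1, h2⟩ i hi
    rcases lt_or_eq_of_le (Nat.lt_succ_iff.mp (by simpa using hi)) with hlt | heq
    · rw [List.take_append_of_le_length (le_of_lt hlt), List.getElem_append_left hlt]
      exact h1 i hlt
    · subst heq
      rw [List.take_append_of_le_length le_rfl, List.take_length,
        List.getElem_append_right le_rfl]
      simpa using h2

end WseqDef

section Core
variable {R : Type*} [CommRing R] [IsDomain R] {n : ℕ} (hn : 0 < n)

open Ideal

lemma memK' {l : List (Rn R n)} {a : Rn R n}
    (ha : a ∈ ofList l ⊔ span {tn R n}) :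
    ct R n hn a ∈ ofList (l.map (ct R n hn)) := by
  obtain ⟨s, hs, z, hz, hsum⟩ := Submodule.mem_sup.mp ha
  obtain ⟨c, hc⟩ := Ideal.mem_span_singleton.mp hz
  have h1 : ct R n hn s ∈ Ideal.map (ct R n hn) (ofList l) := Ideal.mem_map_of_mem _ hs
  rw [Ideal.map_ofList] at h1
  have h2 : ct R n hn a = ct R n hn s := by
    rw [← hsum, hc, map_add, _root_.map_mul]
    have ht : ct R n hn (tn R n) = 0 := by
      rw [tn, ct_mk]; simp
    rw [ht]; ring
  rwa [h2]

lemma memK {l : List (Rn R n)} {a : Rn R n}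
    (ha : ct R n hn a ∈ ofList (l.map (ct R n hn))) :
    ∃ b, a - tn R n * b ∈ ofList l := by
  rw [← Ideal.map_ofList] at ha
  obtain ⟨b0, hb0, hba⟩ := (Ideal.mem_map_iff_of_surjective _ (ct_surjective hn)).mp ha
  obtain ⟨v, hv⟩ := exists_of_ct_eq_zero hn (u := a - b0)
    (by rw [map_sub, hba, sub_self])
  exact ⟨v, by rw [show a - tn R n * v = b0 by linear_combination hv]; exact hb0⟩

lemma memE {l : List (Rn R n)} {x w : Rn R n}
    (hN : NZDI (ofList (l.map (ct R n hn))) (ct R n hn x))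
    (hxw : x * w ∈ ofList l ⊔ span {tn R n}) :
    ∃ b, w - tn R n * b ∈ ofList l := by
  have h1 := memK' hn hxw
  rw [_root_.map_mul] at h1
  exact memK hn (hN _ h1)

lemma phi : ∀ (l : List (Rn R n)), Wseq (l.map (ct R n hn)) →
    ∀ j ≤ n, ∀ a : Rn R n, tn R n ^ j * a ∈ ofList l →
      ∃ b, a - tn R n ^ (n - j) * b ∈ ofList l := by
  intro l
  induction l using List.reverseRecOn with
  | nil =>
    intro _ j hj a ha
    simp only [Ideal.ofList_nil, Ideal.mem_bot] at ha ⊢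
    obtain ⟨v, hv⟩ := phi0 hj ha
    exact ⟨v, by rw [hv]; ring⟩
  | append_singleton l x ih =>
    intro hW j hj a ha
    rw [List.map_append, List.map_singleton, wseq_append_singleton] at hW
    obtain ⟨hW0, hN⟩ := hW
    rw [Ideal.ofList_append, Ideal.ofList_singleton] at ha
    obtain ⟨s, hs, z, hz, hsum⟩ := Submodule.mem_sup.mp ha
    obtain ⟨w, hw⟩ := Ideal.mem_span_singleton'.mp hz
    have hkey : tn R n ^ j * a - x * w ∈ ofList l := by
      rw [show tn R n ^ j * a - x * w = s by linear_combination -hsum - hw]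
      exact hs
    have inner : ∀ k, k ≤ j → ∃ w', w - tn R n ^ k * w' ∈ ofList l := by
      intro k
      induction k with
      | zero => exact fun _ => ⟨w, by simp⟩
      | succ k ihk =>
        intro hk1
        obtain ⟨w', hw'⟩ := ihk (by omega)
        have hpow : tn R n ^ k * tn R n ^ (j - k) = tn R n ^ j := by
          rw [← pow_add]; congr 1; omega
        have h1 : tn R n ^ k * (x * w' - tn R n ^ (j - k) * a) ∈ ofList l := by
          rw [show tn R n ^ k * (x * w' - tn R n ^ (j - k) * a)
              = -(tn R n ^ j * a - x * w) - x * (w - tn R n ^ k * w')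
              by linear_combination (-a) * hpow]
          exact sub_mem (neg_mem hkey) (Ideal.mul_mem_left _ _ hw')
        obtain ⟨v, hv⟩ := ih hW0 k (by omega) _ h1
        have h1p : tn R n ^ (j - k) = tn R n * tn R n ^ (j - k - 1) := by
          rw [← pow_succ']; congr 1; omega
        have h2p : tn R n ^ (n - k) = tn R n * tn R n ^ (n - k - 1) := by
          rw [← pow_succ']; congr 1; omega
        have h3 : x * w' ∈ ofList l ⊔ span {tn R n} := by
          rw [show x * w' = (x * w' - tn R n ^ (j - k) * a - tn R n ^ (n - k) * v)
              + tn R n * (tn R n ^ (j - k - 1) * a + tn R n ^ (n - k - 1) * v)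
              by linear_combination a * h1p + v * h2p]
          exact Submodule.add_mem_sup hv
            (Ideal.mem_span_singleton.mpr (dvd_mul_right _ _))
        obtain ⟨b, hb⟩ := memE hn hN h3
        refine ⟨b, ?_⟩
        rw [show w - tn R n ^ (k + 1) * b
            = (w - tn R n ^ k * w') + tn R n ^ k * (w' - tn R n * b) by ring]
        exact add_mem hw' (Ideal.mul_mem_left _ _ hb)
    obtain ⟨w₀, hw₀⟩ := inner j le_rfl
    have h4 : tn R n ^ j * (a - x * w₀) ∈ ofList l := by
      rw [show tn R n ^ j * (a - x * w₀)
          = (tn R n ^ j * a - x * w) + x * (w - tn R n ^ j * w₀) by ring]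
      exact add_mem hkey (Ideal.mul_mem_left _ _ hw₀)
    obtain ⟨m, hm⟩ := ih hW0 j hj _ h4
    refine ⟨m, ?_⟩
    rw [Ideal.ofList_append, Ideal.ofList_singleton,
      show a - tn R n ^ (n - j) * m
        = (a - x * w₀ - tn R n ^ (n - j) * m) + w₀ * x by ring]
    exact Submodule.add_mem_sup hm (Ideal.mem_span_singleton'.mpr ⟨w₀, rfl⟩)

lemma lemF {l : List (Rn R n)} {x : Rn R n} (hW0 : Wseq (l.map (ct R n hn)))
    (hN : NZDI (ofList (l.map (ct R n hn))) (ct R n hn x)) :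
    NZDI (ofList l) x := by
  intro a ha
  have key : ∀ k, k ≤ n → ∃ a', a - tn R n ^ k * a' ∈ ofList l := by
    intro k
    induction k with
    | zero => exact fun _ => ⟨a, by simp⟩
    | succ k ihk =>
      intro hk1
      obtain ⟨a', ha'⟩ := ihk (by omega)
      have h1 : tn R n ^ k * (x * a') ∈ ofList l := by
        rw [show tn R n ^ k * (x * a') = x * a - x * (a - tn R n ^ k * a') by ring]
        exact sub_mem ha (Ideal.mul_mem_left _ _ ha')
      obtain ⟨v, hv⟩ := phi hn l hW0 k (by omega) _ h1
      have h2p : tn R n ^ (n - k) = tn R n * tn R n ^ (n - k - 1) := by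
        rw [← pow_succ']; congr 1; omega
      have h3 : x * a' ∈ ofList l ⊔ span {tn R n} := by
        rw [show x * a' = (x * a' - tn R n ^ (n - k) * v)
            + tn R n * (tn R n ^ (n - k - 1) * v) by linear_combination v * h2p]
        exact Submodule.add_mem_sup hv
          (Ideal.mem_span_singleton.mpr (dvd_mul_right _ _))
      obtain ⟨b, hb⟩ := memE hn hN h3
      refine ⟨b, ?_⟩
      rw [show a - tn R n ^ (k + 1) * b
          = (a - tn R n ^ k * a') + tn R n ^ k * (a' - tn R n * b) by ring]
      exact add_mem ha' (Ideal.mul_mem_left _ _ hb)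
  obtain ⟨a', ha'⟩ := key n le_rfl
  rw [tn_pow_n] at ha'
  simpa using ha'

lemma lemG {l : List (Rn R n)} {x : Rn R n} (hW0 : Wseq (l.map (ct R n hn)))
    (hN : NZDI (ofList l) x) :
    NZDI (ofList (l.map (ct R n hn))) (ct R n hn x) := by
  intro r hr
  set a := algebraMap R (Rn R n) r with ha_def
  have hxa : ct R n hn (x * a) ∈ ofList (l.map (ct R n hn)) := by
    rw [_root_.map_mul, ha_def, ct_algebraMap]
    exact hr
  obtain ⟨m, hm⟩ := memK hn hxa
  have h0 : tn R n ^ (n - 1) * tn R n = 0 := by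
    rw [← pow_succ, show n - 1 + 1 = n by omega, tn_pow_n]
  have h1 : x * (tn R n ^ (n - 1) * a) ∈ ofList l := by
    rw [show x * (tn R n ^ (n - 1) * a)
        = tn R n ^ (n - 1) * (x * a - tn R n * m) by linear_combination m * h0]
    exact Ideal.mul_mem_left _ _ hm
  have h2 := hN _ h1
  obtain ⟨b, hb⟩ := phi hn l hW0 (n - 1) (by omega) _ h2
  rw [show n - (n - 1) = 1 by omega, pow_one] at hb
  have h3 : a ∈ ofList l ⊔ span {tn R n} := by
    rw [show a = (a - tn R n * b) + tn R n * b by ring]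
    exact Submodule.add_mem_sup hb (Ideal.mem_span_singleton.mpr (dvd_mul_right _ _))
  have h4 := memK' hn h3
  rwa [ha_def, ct_algebraMap] at h4

lemma main1 : ∀ l : List (Rn R n), Wseq l ↔ Wseq (l.map (ct R n hn)) := by
  intro l
  induction l using List.reverseRecOn with
  | nil =>
    constructor <;> intro _ i hi <;> simp at hi
  | append_singleton l x ih =>
    rw [List.map_append, List.map_singleton, wseq_append_singleton,
      wseq_append_singleton]
    constructor
    · rintro ⟨h1, h2⟩
      have hW0 := ih.mp h1
      exact ⟨hW0, lemG hn hW0 h2⟩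
    · rintro ⟨h1, h2⟩
      exact ⟨ih.mpr h1, lemF hn h1 h2⟩

end Core

lemma ofList_ofFn {S : Type*} [CommRing S] {p : ℕ} (f : Fin p → S) :
    Ideal.ofList (List.ofFn f) = Ideal.span (Set.range f) :=
  congrArg Ideal.span (Set.ext fun a => by simp [List.mem_ofFn])


open RingTheory.Sequence in
/-- Let `x_1, ..., x_p ∈ R[n]` with constant terms `x_{1,0}, ..., x_{p,0} ∈ R`; let
`I = (x_1,...,x_p) ⊆ R[n]` and `I_0 = (x_{1,0},...,x_{p,0}) ⊆ R`. Then
(i) `(x_1,...,x_p)` is a regular sequence in `R[n]` iff `(x_{1,0},...,x_{p,0})` is a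
regular sequence in `R`;
(ii) if `(x_1,...,x_p)` is a regular sequence in `R[n]`, then for every `y ∈ R`,
`t^{n-1} y ∈ I ↔ y ∈ I_0`. -/
theorem regular_sequence_iff_constant_terms
    {R : Type*} [CommRing R] [IsDomain R] [IsNoetherianRing R]
    (n p : ℕ) (hn : 0 < n) (hp : 0 < p)
    (x : Fin p → Rn R n) :
    (IsWeaklyRegular (Rn R n) (List.ofFn x) ↔
        IsWeaklyRegular R (List.ofFn fun i => ct R n hn (x i))) ∧
    (IsWeaklyRegular (Rn R n) (List.ofFn x) →
        ∀ y : R,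
          (tn R n ^ (n - 1) * algebraMap R (Rn R n) y ∈ Ideal.span (Set.range x) ↔
            y ∈ Ideal.span (Set.range fun i => ct R n hn (x i)))) := by
  
  have hofn : Ideal.ofList (List.ofFn x) = Ideal.span (Set.range x) :=
    ofList_ofFn x
  have hofn0 : Ideal.ofList ((List.ofFn x).map (ct R n hn))
      = Ideal.span (Set.range fun i => ct R n hn (x i)) := by
    rw [List.map_ofFn]; exact ofList_ofFn _
  have hmap : (List.ofFn x).map (ct R n hn) = List.ofFn (fun i => ct R n hn (x i)) := by
    rw [List.map_ofFn]; rfl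
  constructor
  · rw [isWeaklyRegular_ring_iff, isWeaklyRegular_ring_iff, main1 hn, hmap]
  · intro h y
    have hW0 : Wseq ((List.ofFn x).map (ct R n hn)) :=
      (main1 hn _).mp ((isWeaklyRegular_ring_iff _).mp h)
    constructor
    · intro hy
      rw [← hofn] at hy
      obtain ⟨b, hb⟩ := phi hn _ hW0 (n - 1) (by omega) _ hy
      rw [show n - (n - 1) = 1 by omega, pow_one] at hb
      have h3 : algebraMap R (Rn R n) y ∈ Ideal.ofList (List.ofFn x) ⊔ Ideal.span {tn R n} := by
        rw [show algebraMap R (Rn R n) y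
            = (algebraMap R (Rn R n) y - tn R n * b) + tn R n * b by ring]
        exact Submodule.add_mem_sup hb (Ideal.mem_span_singleton.mpr (dvd_mul_right _ _))
      have h4 := memK' hn h3
      rwa [ct_algebraMap, hofn0] at h4
    · intro hy
      have hy' : ct R n hn (algebraMap R (Rn R n) y)
          ∈ Ideal.ofList ((List.ofFn x).map (ct R n hn)) := by
        rw [ct_algebraMap, hofn0]; exact hy
      obtain ⟨b, hb⟩ := memK hn hy'
      rw [← hofn]
      have h0 : tn R n ^ (n - 1) * tn R n = 0 := by
        rw [← pow_succ, show n - 1 + 1 = n by omega, tn_pow_n]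
      rw [show tn R n ^ (n - 1) * algebraMap R (Rn R n) y
          = tn R n ^ (n - 1) * (algebraMap R (Rn R n) y - tn R n * b)
          by linear_combination b * h0]
      exact Ideal.mul_mem_left _ _ hb
end
end
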